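/- Let a ≥ 0, let f : [0,∞) → ℝ be bounded and continuous, let 0 < τ ≤ 1 and x ∈ [0,∞), and suppose the Lipschitz-type maximal function ω̃_τ(f,x) = sup_{t∈[0,∞), t≠x} |f(t) − f(x)|/|t−x|^τ is finite. Then for all n ∈ ℕ, |K_n^a(f;x) − f(x)| ≤ ω̃_τ(f,x)·(u_{n,2}^a(x))^{τ/2}, where u_{n,2}^a(x) = K_n^a((t−x)²;x). -/

import Mathlib

open MeasureTheory Filter

noncomputable section

/-- Rising factorial `(n)_i = n(n+1)⋯(n+i-1)`, with `(n)_0 = 1`. -/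
def risingFac (n : ℕ) : ℕ → ℝ
  | 0 => 1
  | i + 1 => risingFac n i * ((n : ℝ) + i)

/-- `P_k(n,a) = Σ_{i=0}^{k} C(k,i) (n)_i a^(k-i)`. -/
def Pba (k n : ℕ) (a : ℝ) : ℝ :=
  ∑ i ∈ Finset.range (k + 1), (k.choose i : ℝ) * risingFac n i * a ^ (k - i)

/-- Generalized Baskakov basis function `W_{n,k}^a(x)`. -/
def Wgb (a : ℝ) (n k : ℕ) (x : ℝ) : ℝ :=
  Real.exp (-(a * x) / (1 + x)) * (Pba k n a / (Nat.factorial k : ℝ)) * x ^ k /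
    (1 + x) ^ (n + k)

/-- Generalized Baskakov–Kantorovich operator `K_n^a(f;x)`. -/
def Kgb (a : ℝ) (n : ℕ) (f : ℝ → ℝ) (x : ℝ) : ℝ :=
  ((n : ℝ) + 1) * ∑' k : ℕ,
    Wgb a n k x * ∫ t in ((k : ℝ) / ((n : ℝ) + 1))..(((k : ℝ) + 1) / ((n : ℝ) + 1)), f t


/-- Lipschitz-type maximal function
`ω̃_τ(f,x) = sup_{t∈[0,∞), t≠x} |f(t) − f(x)|/|t−x|^τ`. -/
def lipMaximal (f : ℝ → ℝ) (τ x : ℝ) : ℝ :=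
  sSup {y | ∃ t : ℝ, 0 ≤ t ∧ t ≠ x ∧ y = |f t - f x| / |t - x| ^ τ}

open scoped Nat

/-! `K_n^a` is positive, linear and reproduces constants: `∑ₖ W_{n,k}^a(x) = 1`, the generating
series of `P_k(n,a)/k!` being the Cauchy product of the negative binomial and exponential series.
So `|K_n^a(f;x) - f(x)| ≤ ω̃_τ(f,x) K_n^a(|t - x|^τ; x)`. As `s ↦ s^(τ/2)` is concave,
`((t - x)²)^(τ/2)` lies below its tangent line at `s = V := u_{n,2}^a(x)`, an affine function of
`(t - x)²` whose image under `K_n^a` is exactly `V^(τ/2)`. -/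

lemma risingFac_eq_ascFactorial (n i : ℕ) : risingFac n i = n.ascFactorial i := by
  induction i with
  | zero => simp [risingFac]
  | succ i ih => rw [risingFac, ih, Nat.ascFactorial_succ]; push_cast; ring

lemma Pba_nonneg {a : ℝ} (ha : 0 ≤ a) (k n : ℕ) : 0 ≤ Pba k n a :=
  Finset.sum_nonneg fun i _ => by rw [risingFac_eq_ascFactorial]; positivity

lemma hasSum_risingFac_mul_pow_div_factorial {w : ℝ} (hw : ‖w‖ < 1) (n : ℕ) :
    HasSum (fun i => risingFac n i * w ^ i / i !) ((1 - w) ^ n)⁻¹ := by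
  cases n with
  | zero =>
    rw [pow_zero, inv_one]
    convert hasSum_ite_eq 0 (1 : ℝ) with i
    cases i <;> simp [risingFac_eq_ascFactorial, Nat.zero_ascFactorial]
  | succ m =>
    rw [← one_div]
    convert! hasSum_choose_mul_geometric_of_norm_lt_one m hw using 2 with i
    rw [risingFac_eq_ascFactorial, Nat.ascFactorial_eq_factorial_mul_choose,
      ← Nat.choose_symm_add]
    push_cast
    field_simp
    rw [Nat.add_comm, mul_comm]

lemma hasSum_Pba_div_factorial_mul_pow (a : ℝ) {w : ℝ} (hw₀ : 0 ≤ w) (hw₁ : w < 1) (n : ℕ) :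
    HasSum (fun k => Pba k n a / k ! * w ^ k) (Real.exp (a * w) / (1 - w) ^ n) := by
  have hw : ‖w‖ < 1 := by rwa [Real.norm_of_nonneg hw₀]
  have hF := hasSum_risingFac_mul_pow_div_factorial hw n
  have hG := NormedSpace.expSeries_div_hasSum_exp (a * w)
  rw [← Real.exp_eq_exp_ℝ] at hG
  have hFnorm : Summable fun i => ‖risingFac n i * w ^ i / (i ! : ℝ)‖ := by
    refine hF.summable.congr fun i => (Real.norm_of_nonneg ?_).symm
    rw [risingFac_eq_ascFactorial]; positivity
  have hGnorm : Summable fun j => ‖(a * w) ^ j / (j ! : ℝ)‖ := by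
    simpa [norm_pow, norm_div] using Real.summable_pow_div_factorial ‖a * w‖
  have hprod := hasSum_sum_range_mul_of_summable_norm hFnorm hGnorm
  rw [hF.tsum_eq, hG.tsum_eq, ← div_eq_inv_mul] at hprod
  convert! hprod using 2 with k
  rw [Pba, Finset.sum_div, Finset.sum_mul]
  refine Finset.sum_congr rfl fun i hi => ?_
  have hik : i ≤ k := Nat.lt_succ_iff.mp (Finset.mem_range.mp hi)
  have hch : (k.choose i : ℝ) * i ! * (k - i)! = k ! := by
    exact_mod_cast Nat.choose_mul_factorial_mul_factorial hik
  have hchoose : (k.choose i : ℝ) ≠ 0 := by exact_mod_cast (Nat.choose_pos hik).ne'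
  rw [mul_pow, ← hch, ← pow_mul_pow_sub w hik]
  field_simp

lemma Wgb_eq {x : ℝ} (hx : 0 ≤ x) (a : ℝ) (n k : ℕ) :
    Wgb a n k x = Real.exp (-(a * (x / (1 + x)))) * (1 - x / (1 + x)) ^ n *
      (Pba k n a / k ! * (x / (1 + x)) ^ k) := by
  have h1x : 1 + x ≠ 0 := by positivity
  rw [Wgb, one_sub_div h1x, add_sub_cancel_right, div_pow, div_pow, one_pow]
  field_simp
  ring

lemma hasSum_Wgb {x : ℝ} (hx : 0 ≤ x) (a : ℝ) (n : ℕ) : HasSum (fun k => Wgb a n k x) 1 := by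
  set w := x / (1 + x)
  have hw₁ : w < 1 := by rw [div_lt_one (by positivity)]; linarith
  have hw : (1 - w) ^ n ≠ 0 := pow_ne_zero _ (sub_pos.mpr hw₁).ne'
  simp_rw [Wgb_eq hx]
  convert! (hasSum_Pba_div_factorial_mul_pow a (by positivity) hw₁ n).mul_left
    (Real.exp (-(a * w)) * (1 - w) ^ n)
  rw [mul_div_assoc', mul_right_comm, ← Real.exp_add, neg_add_cancel, Real.exp_zero, one_mul,
    div_self hw]

lemma Wgb_nonneg {a x : ℝ} (ha : 0 ≤ a) (hx : 0 ≤ x) (n k : ℕ) : 0 ≤ Wgb a n k x := by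
  have := Pba_nonneg ha k n
  unfold Wgb
  positivity

lemma summable_succ_pow_mul_mul_pow {c : ℕ → ℝ} {r w : ℝ} (hc : ∀ k, 0 ≤ c k) (hw : 0 ≤ w)
    (hwr : w < r) (hs : Summable fun k => c k * r ^ k) (m : ℕ) :
    Summable fun k : ℕ => ((k : ℝ) + 1) ^ m * c k * w ^ k := by
  have hr : 0 < r := hw.trans_lt hwr
  have hq : ‖w / r‖ < 1 := by
    rw [Real.norm_of_nonneg (by positivity), div_lt_one hr]; exact hwr
  refine .of_norm_bounded_eventually_nat
    ((summable_pow_mul_geometric_of_norm_lt_one m hq).mul_left (2 ^ m)) ?_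
  filter_upwards [hs.tendsto_atTop_zero.eventually (eventually_le_nhds one_pos),
    eventually_ge_atTop 1] with k hck hk
  have hk : (k : ℝ) + 1 ≤ 2 * k := by
    have : (1 : ℝ) ≤ k := by exact_mod_cast hk
    linarith
  calc ‖((k : ℝ) + 1) ^ m * c k * w ^ k‖ = ((k : ℝ) + 1) ^ m * (w / r) ^ k * (c k * r ^ k) := by
        rw [Real.norm_of_nonneg (by have := hc k; positivity), div_pow]
        field_simp
    _ ≤ (2 * k) ^ m * (w / r) ^ k * 1 := by
        have := hc k
        gcongr
    _ = 2 ^ m * ((k : ℝ) ^ m * (w / r) ^ k) := by ring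

lemma summable_succ_pow_mul_Wgb {a x : ℝ} (ha : 0 ≤ a) (hx : 0 ≤ x) (n m : ℕ) :
    Summable fun k : ℕ => ((k : ℝ) + 1) ^ m * Wgb a n k x := by
  set w := x / (1 + x)
  have hw₁ : w < 1 := by rw [div_lt_one (by positivity)]; linarith
  have hr : (1 + w) / 2 < 1 := by linarith
  have hc := summable_succ_pow_mul_mul_pow (c := fun k => Pba k n a / k !)
    (fun k => by have := Pba_nonneg ha k n; positivity) (by positivity)
    (by linarith : w < (1 + w) / 2)
    (hasSum_Pba_div_factorial_mul_pow a (by positivity) hr n).summable m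
  simp_rw [Wgb_eq hx]
  convert! hc.mul_left (Real.exp (-(a * w)) * (1 - w) ^ n) using 2 with k
  ring

def QuadGrowth (g : ℝ → ℝ) : Prop :=
  ContinuousOn g (Set.Ici 0) ∧ ∃ C, ∀ t, 0 ≤ t → |g t| ≤ C * (1 + t ^ 2)

namespace QuadGrowth

variable {f g : ℝ → ℝ}

lemma const (c : ℝ) : QuadGrowth fun _ => c :=
  ⟨continuousOn_const, |c|, fun t _ => le_mul_of_one_le_right (abs_nonneg c) (by nlinarith)⟩

lemma add (hf : QuadGrowth f) (hg : QuadGrowth g) : QuadGrowth fun t => f t + g t := by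
  obtain ⟨hf, C, hC⟩ := hf
  obtain ⟨hg, D, hD⟩ := hg
  refine ⟨hf.add hg, C + D, fun t ht => ?_⟩
  calc |f t + g t| ≤ |f t| + |g t| := abs_add_le _ _
    _ ≤ (C + D) * (1 + t ^ 2) := by linarith [hC t ht, hD t ht]

lemma sub (hf : QuadGrowth f) (hg : QuadGrowth g) : QuadGrowth fun t => f t - g t := by
  obtain ⟨hf, C, hC⟩ := hf
  obtain ⟨hg, D, hD⟩ := hg
  refine ⟨hf.sub hg, C + D, fun t ht => ?_⟩
  calc |f t - g t| ≤ |f t| + |g t| := abs_sub _ _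
    _ ≤ (C + D) * (1 + t ^ 2) := by linarith [hC t ht, hD t ht]

lemma const_mul (c : ℝ) (hg : QuadGrowth g) : QuadGrowth fun t => c * g t := by
  obtain ⟨hg, C, hC⟩ := hg
  refine ⟨continuousOn_const.mul hg, |c| * C, fun t ht => ?_⟩
  rw [abs_mul, mul_assoc]
  exact mul_le_mul_of_nonneg_left (hC t ht) (abs_nonneg c)

lemma of_bounded (hg : ContinuousOn g (Set.Ici 0)) (hB : ∃ B, ∀ t, 0 ≤ t → |g t| ≤ B) :
    QuadGrowth g := by
  obtain ⟨B, hB⟩ := hB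
  have hB₀ : 0 ≤ B := (abs_nonneg _).trans (hB 0 le_rfl)
  exact ⟨hg, B, fun t ht => le_mul_of_one_le_right hB₀ (by nlinarith) |>.trans' (hB t ht)⟩

end QuadGrowth

lemma quadGrowth_sq_sub (x : ℝ) : QuadGrowth fun t => (t - x) ^ 2 := by
  refine ⟨by fun_prop, 2 + 2 * x ^ 2, fun t _ => ?_⟩
  rw [abs_of_nonneg (sq_nonneg _)]
  nlinarith [sq_nonneg (t + x), sq_nonneg (t * x)]

lemma intervalIntegrable_of_continuousOn_Ici {g : ℝ → ℝ} (hg : ContinuousOn g (Set.Ici 0))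
    {c d : ℝ} (hc : 0 ≤ c) (hd : 0 ≤ d) : IntervalIntegrable g volume c d :=
  (hg.mono fun _ ht => le_trans (le_min hc hd) ht.1).intervalIntegrable

section Kantorovich

variable {a x : ℝ} {f g : ℝ → ℝ}

lemma summable_Wgb_mul_integral (ha : 0 ≤ a) (hx : 0 ≤ x) (hg : QuadGrowth g) (n : ℕ) :
    Summable fun k : ℕ =>
      Wgb a n k x * ∫ t in (k : ℝ) / ((n : ℝ) + 1)..((k : ℝ) + 1) / ((n : ℝ) + 1), g t := by
  obtain ⟨-, C, hC⟩ := hg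
  have hC₀ : 0 ≤ C := by simpa using (abs_nonneg _).trans (hC 0 le_rfl)
  have hN : (1 : ℝ) ≤ (n : ℝ) + 1 := by simp
  refine .of_norm_bounded ((summable_succ_pow_mul_Wgb ha hx n 2).mul_left (2 * C)) fun k => ?_
  have hbound : ∀ t ∈ Set.uIoc ((k : ℝ) / ((n : ℝ) + 1)) (((k : ℝ) + 1) / ((n : ℝ) + 1)),
      ‖g t‖ ≤ 2 * C * ((k : ℝ) + 1) ^ 2 := by
    intro t ht
    rw [Set.uIoc_of_le (by gcongr; linarith)] at ht
    have ht₀ : 0 ≤ t := (div_nonneg k.cast_nonneg (by positivity)).trans ht.1.le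
    have ht₁ : t ≤ (k : ℝ) + 1 := ht.2.trans (div_le_self (by positivity) hN)
    calc ‖g t‖ ≤ C * (1 + t ^ 2) := hC t ht₀
      _ ≤ 2 * C * ((k : ℝ) + 1) ^ 2 := by
        have : t ^ 2 ≤ ((k : ℝ) + 1) ^ 2 := by gcongr
        nlinarith [one_le_pow₀ (n := 2) (by linarith : (1 : ℝ) ≤ (k : ℝ) + 1)]
  have hlen : |((k : ℝ) + 1) / ((n : ℝ) + 1) - (k : ℝ) / ((n : ℝ) + 1)| ≤ 1 := by
    rw [← sub_div, add_sub_cancel_left, abs_of_pos (by positivity)]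
    exact div_le_one_of_le₀ hN (by positivity)
  rw [norm_mul, Real.norm_of_nonneg (Wgb_nonneg ha hx n k)]
  calc Wgb a n k x * ‖∫ t in (k : ℝ) / ((n : ℝ) + 1)..((k : ℝ) + 1) / ((n : ℝ) + 1), g t‖
      ≤ Wgb a n k x * (2 * C * ((k : ℝ) + 1) ^ 2 * 1) := by
        gcongr
        · exact Wgb_nonneg ha hx n k
        · exact (intervalIntegral.norm_integral_le_of_norm_le_const hbound).trans
            (by gcongr)
    _ = 2 * C * (((k : ℝ) + 1) ^ 2 * Wgb a n k x) := by ring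

lemma integral_const_div_add_one (k N c : ℝ) : ∫ _ in k / N..(k + 1) / N, c = c / N := by
  rw [intervalIntegral.integral_const, smul_eq_mul, ← sub_div, add_sub_cancel_left]
  ring

lemma Kgb_const (hx : 0 ≤ x) (a : ℝ) (n : ℕ) (c : ℝ) : Kgb a n (fun _ => c) x = c := by
  simp_rw [Kgb, integral_const_div_add_one, tsum_mul_right, (hasSum_Wgb hx a n).tsum_eq]
  field_simp

lemma Kgb_const_mul (a : ℝ) (n : ℕ) (c : ℝ) (g : ℝ → ℝ) (x : ℝ) :
    Kgb a n (fun t => c * g t) x = c * Kgb a n g x := by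
  simp_rw [Kgb, intervalIntegral.integral_const_mul, mul_left_comm _ c, tsum_mul_left]
  ring

lemma Kgb_add (ha : 0 ≤ a) (hx : 0 ≤ x) (hf : QuadGrowth f) (hg : QuadGrowth g) (n : ℕ) :
    Kgb a n (fun t => f t + g t) x = Kgb a n f x + Kgb a n g x := by
  rw [Kgb, Kgb, Kgb, ← mul_add, ← (summable_Wgb_mul_integral ha hx hf n).tsum_add
    (summable_Wgb_mul_integral ha hx hg n)]
  congr 1
  refine tsum_congr fun k => ?_
  rw [intervalIntegral.integral_add (intervalIntegrable_of_continuousOn_Ici hf.1 (by positivity)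
    (by positivity)) (intervalIntegrable_of_continuousOn_Ici hg.1 (by positivity) (by positivity)),
    mul_add]

lemma Kgb_sub (ha : 0 ≤ a) (hx : 0 ≤ x) (hf : QuadGrowth f) (hg : QuadGrowth g) (n : ℕ) :
    Kgb a n (fun t => f t - g t) x = Kgb a n f x - Kgb a n g x := by
  rw [Kgb, Kgb, Kgb, ← mul_sub, ← (summable_Wgb_mul_integral ha hx hf n).tsum_sub
    (summable_Wgb_mul_integral ha hx hg n)]
  congr 1
  refine tsum_congr fun k => ?_
  rw [intervalIntegral.integral_sub (intervalIntegrable_of_continuousOn_Ici hf.1 (by positivity)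
    (by positivity)) (intervalIntegrable_of_continuousOn_Ici hg.1 (by positivity) (by positivity)),
    mul_sub]

lemma abs_Kgb_le {h : ℝ → ℝ} (ha : 0 ≤ a) (hx : 0 ≤ x) (hg : ContinuousOn g (Set.Ici 0))
    (hh : QuadGrowth h) (hgh : ∀ t, 0 ≤ t → |g t| ≤ h t) (n : ℕ) :
    |Kgb a n g x| ≤ Kgb a n h x := by
  rw [Kgb, Kgb, abs_mul, abs_of_pos (by positivity)]
  gcongr
  rw [← Real.norm_eq_abs]
  refine tsum_of_norm_bounded (summable_Wgb_mul_integral ha hx hh n).hasSum fun k => ?_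
  have hkN : (k : ℝ) / ((n : ℝ) + 1) ≤ ((k : ℝ) + 1) / ((n : ℝ) + 1) := by gcongr; linarith
  rw [norm_mul, Real.norm_of_nonneg (Wgb_nonneg ha hx n k), Real.norm_eq_abs]
  gcongr
  · exact Wgb_nonneg ha hx n k
  · refine (intervalIntegral.abs_integral_le_integral_abs hkN).trans
      (intervalIntegral.integral_mono_on hkN ?_ ?_ fun t ht => hgh t ?_)
    · exact (intervalIntegrable_of_continuousOn_Ici hg (by positivity) (by positivity)).abs
    · exact intervalIntegrable_of_continuousOn_Ici hh.1 (by positivity) (by positivity)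
    · exact (div_nonneg k.cast_nonneg (by positivity)).trans ht.1

lemma integral_sq_sub_pos {c d : ℝ} (hcd : c < d) (x : ℝ) : 0 < ∫ t in c..d, (t - x) ^ 2 := by
  rw [intervalIntegral.integral_comp_sub_right (fun u => u ^ 2) x, integral_pow, sub_div]
  have : (c - x) ^ 3 < (d - x) ^ 3 := Odd.strictMono_pow (by decide) (by linarith)
  linarith

lemma Kgb_sq_sub_pos (ha : 0 ≤ a) (hx : 0 ≤ x) (n : ℕ) :
    0 < Kgb a n (fun t => (t - x) ^ 2) x := by
  have hW₀ : 0 < Wgb a n 0 x := by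
    simp only [Wgb, Pba, risingFac, zero_add, Finset.range_one, Finset.sum_singleton,
      Nat.choose_self, Nat.factorial_zero, Nat.cast_one, tsub_zero, pow_zero, mul_one, div_one]
    positivity
  refine mul_pos (by positivity) ((summable_Wgb_mul_integral ha hx (quadGrowth_sq_sub x) n).tsum_pos
    (fun k => mul_nonneg (Wgb_nonneg ha hx n k) ?_) 0 (mul_pos hW₀ (integral_sq_sub_pos ?_ x)))
  · exact intervalIntegral.integral_nonneg (by gcongr; linarith) fun _ _ => sq_nonneg _
  · gcongr; simp

end Kantorovich

lemma rpow_le_tangent_line {s V y : ℝ} (hs₀ : 0 ≤ s) (hs₁ : s ≤ 1) (hV : 0 < V) (hy : 0 ≤ y) :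
    y ^ s ≤ V ^ s * (s * (y / V) + (1 - s)) := by
  have hbernoulli := rpow_one_add_le_one_add_mul_self
    (by linarith [div_nonneg hy hV.le] : -1 ≤ y / V - 1) hs₀ hs₁
  rw [add_sub_cancel] at hbernoulli
  calc y ^ s = V ^ s * (y / V) ^ s := by
        rw [← Real.mul_rpow hV.le (div_nonneg hy hV.le), mul_div_cancel₀ _ hV.ne']
    _ ≤ V ^ s * (s * (y / V) + (1 - s)) := by
        gcongr
        linarith

section LipMaximal

variable {f : ℝ → ℝ} {τ x : ℝ}

lemma lipMaximal_nonneg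
    (hfin : BddAbove {y | ∃ t : ℝ, 0 ≤ t ∧ t ≠ x ∧ y = |f t - f x| / |t - x| ^ τ}) :
    0 ≤ lipMaximal f τ x := by
  have hne : |x| + 1 ≠ x := by linarith [le_abs_self x]
  exact (by positivity : (0 : ℝ) ≤ |f (|x| + 1) - f x| / |(|x| + 1) - x| ^ τ).trans
    (le_csSup hfin ⟨|x| + 1, by positivity, hne, rfl⟩)

lemma abs_sub_le_lipMaximal_mul
    (hfin : BddAbove {y | ∃ t : ℝ, 0 ≤ t ∧ t ≠ x ∧ y = |f t - f x| / |t - x| ^ τ})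
    {t : ℝ} (ht : 0 ≤ t) : |f t - f x| ≤ lipMaximal f τ x * |t - x| ^ τ := by
  rcases eq_or_ne t x with rfl | htx
  · rw [sub_self, abs_zero]
    exact mul_nonneg (lipMaximal_nonneg hfin) (by positivity)
  · have hpos : 0 < |t - x| ^ τ := by
      have := abs_pos.2 (sub_ne_zero.2 htx)
      positivity
    exact (div_le_iff₀ hpos).1 (le_csSup hfin ⟨t, ht, htx, rfl⟩)

end LipMaximal

/-- estimate via the Lipschitz-type maximal function. -/
theorem statement2 (a τ x : ℝ) (ha : 0 ≤ a) (f : ℝ → ℝ)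
    (hbdd : ∃ B : ℝ, ∀ y : ℝ, 0 ≤ y → |f y| ≤ B)
    (hcont : ContinuousOn f (Set.Ici 0))
    (hτ : 0 < τ) (hτ1 : τ ≤ 1) (hx : 0 ≤ x)
    (hfin : BddAbove {y | ∃ t : ℝ, 0 ≤ t ∧ t ≠ x ∧ y = |f t - f x| / |t - x| ^ τ}) :
    ∀ n : ℕ,
      |Kgb a n f x - f x| ≤
        lipMaximal f τ x * (Kgb a n (fun t => (t - x) ^ 2) x) ^ (τ / 2) := by
  intro n
  set M := lipMaximal f τ x
  set V := Kgb a n (fun t => (t - x) ^ 2) x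
  have hV : 0 < V := Kgb_sq_sub_pos ha hx n
  set A := M * V ^ (τ / 2) * (τ / 2) / V with hA
  set C := M * V ^ (τ / 2) * (1 - τ / 2) with hC
  have hf : QuadGrowth f := .of_bounded hcont hbdd
  have hq : QuadGrowth fun t => A * (t - x) ^ 2 := (quadGrowth_sq_sub x).const_mul A
  have hmaj : ∀ t, 0 ≤ t → |f t - f x| ≤ A * (t - x) ^ 2 + C := by
    intro t ht
    have hM := lipMaximal_nonneg hfin
    calc |f t - f x| ≤ M * |t - x| ^ τ := abs_sub_le_lipMaximal_mul hfin ht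
      _ = M * ((t - x) ^ 2) ^ (τ / 2) := by
        rw [← sq_abs, ← Real.rpow_natCast, ← Real.rpow_mul (abs_nonneg _)]
        ring_nf
      _ ≤ M * (V ^ (τ / 2) * (τ / 2 * ((t - x) ^ 2 / V) + (1 - τ / 2))) := by
        gcongr
        exact rpow_le_tangent_line (by linarith) (by linarith) hV (sq_nonneg _)
      _ = A * (t - x) ^ 2 + C := by ring
  calc |Kgb a n f x - f x| = |Kgb a n (fun t => f t - f x) x| := by
        rw [Kgb_sub ha hx hf (.const _), Kgb_const hx]
    _ ≤ Kgb a n (fun t => A * (t - x) ^ 2 + C) x :=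
        abs_Kgb_le ha hx (hcont.sub continuousOn_const) (hq.add (.const C)) hmaj n
    _ = A * V + C := by rw [Kgb_add ha hx hq (.const C), Kgb_const_mul, Kgb_const hx]
    _ = M * V ^ (τ / 2) := by
        rw [hA, hC]
        field_simp
        ring
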